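/- Let (X, μ) be a finite measure space, v ∈ L¹(μ), u_n → u in L¹(μ), let ε_n > 0 with ε_n → 0, and let χ ∈ L^∞(μ) be such that ∫_X H_{ε_n}(u_n − v)·g dμ → ∫_X χ·g dμ for every g ∈ L¹(μ). Then almost everywhere 0 ≤ χ ≤ 1, χ = 1 on the set {u > v}, and χ = 0 on the set {u < v}. -/

import Mathlib

open MeasureTheory Filter

/-- The regularized Heaviside function `H_ε`. -/
noncomputable def Heps (ε t : ℝ) : ℝ := max 0 (min (t / ε) 1)

lemma Heps_nonneg (ε t : ℝ) : 0 ≤ Heps ε t := le_max_left _ _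

lemma Heps_le_one (ε t : ℝ) : Heps ε t ≤ 1 := max_le zero_le_one (min_le_right _ _)

lemma Heps_eq_one {ε t : ℝ} (hε : 0 < ε) (h : ε ≤ t) : Heps ε t = 1 := by
  unfold Heps
  rw [min_eq_right ((one_le_div hε).2 h), max_eq_right zero_le_one]

lemma Heps_eq_zero {ε t : ℝ} (hε : 0 < ε) (h : t ≤ 0) : Heps ε t = 0 := by
  unfold Heps
  exact max_eq_left (le_trans (min_le_left _ _) (div_nonpos_of_nonpos_of_nonneg h hε.le))

lemma Heps_continuous (ε : ℝ) : Continuous (Heps ε) :=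
  continuous_const.max ((continuous_id.div_const ε).min continuous_const)

theorem stmt13 {X : Type*} [MeasurableSpace X] (μ : Measure X) [IsFiniteMeasure μ]
    (v : X → ℝ) (hv : Integrable v μ)
    (u : ℕ → X → ℝ) (u₀ : X → ℝ)
    (hu : ∀ n, Integrable (u n) μ) (hu₀ : Integrable u₀ μ)
    (huconv : Tendsto (fun n => ∫ x, |u n x - u₀ x| ∂μ) atTop (nhds 0))
    (ε : ℕ → ℝ) (hε : ∀ n, 0 < ε n) (hε0 : Tendsto ε atTop (nhds 0))
    (χ : X → ℝ) (hχ : MemLp χ ⊤ μ)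
    (hweak : ∀ g : X → ℝ, Integrable g μ →
      Tendsto (fun n => ∫ x, Heps (ε n) (u n x - v x) * g x ∂μ) atTop
        (nhds (∫ x, χ x * g x ∂μ))) :
    (∀ᵐ x ∂μ, 0 ≤ χ x ∧ χ x ≤ 1) ∧
    (∀ᵐ x ∂μ, u₀ x > v x → χ x = 1) ∧
    (∀ᵐ x ∂μ, u₀ x < v x → χ x = 0) := by
  have hχint : Integrable χ μ := hχ.integrable le_top
  have hHasm : ∀ n, AEStronglyMeasurable (fun x => Heps (ε n) (u n x - v x)) μ :=
    fun n => (Heps_continuous (ε n)).comp_aestronglyMeasurable ((hu n).sub hv).1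
  have hHmul : ∀ (n : ℕ) {g : X → ℝ}, Integrable g μ →
      Integrable (fun x => Heps (ε n) (u n x - v x) * g x) μ := by
    intro n g hg
    refine hg.mono ((hHasm n).mul hg.1) (Eventually.of_forall fun x => ?_)
    rw [norm_mul]
    have h1 : ‖Heps (ε n) (u n x - v x)‖ ≤ 1 := by
      rw [Real.norm_eq_abs, abs_of_nonneg (Heps_nonneg _ _)]; exact Heps_le_one _ _
    calc ‖Heps (ε n) (u n x - v x)‖ * ‖g x‖ ≤ 1 * ‖g x‖ :=
          mul_le_mul_of_nonneg_right h1 (norm_nonneg _)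
      _ = ‖g x‖ := one_mul _
  have hint_eq : ∀ s : Set X, MeasurableSet s →
      ∫ x, χ x * s.indicator (fun _ => (1:ℝ)) x ∂μ = ∫ x in s, χ x ∂μ := by
    intro s hs
    rw [← integral_indicator hs]
    congr 1; ext x
    by_cases hx : x ∈ s <;> simp [hx]
  have hg_int : ∀ s : Set X, MeasurableSet s → Integrable (s.indicator (fun _ => (1:ℝ))) μ :=
    fun s hs => (integrable_const 1).indicator hs
  -- Part 1: 0 ≤ χ ≤ 1 a.e.
  have hnonneg : 0 ≤ᵐ[μ] χ := by
    apply ae_nonneg_of_forall_setIntegral_nonneg hχint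
    intro s hs _
    rw [← hint_eq s hs]
    refine ge_of_tendsto' (hweak _ (hg_int s hs)) fun n => integral_nonneg fun x => ?_
    exact mul_nonneg (Heps_nonneg _ _) (Set.indicator_nonneg (fun _ _ => zero_le_one) x)
  have hsetle : ∀ s : Set X, MeasurableSet s → ∫ x in s, χ x ∂μ ≤ (μ s).toReal := by
    intro s hs
    rw [← hint_eq s hs]
    refine le_of_tendsto' (hweak _ (hg_int s hs)) fun n => ?_
    calc ∫ x, Heps (ε n) (u n x - v x) * s.indicator (fun _ => (1:ℝ)) x ∂μ
        ≤ ∫ x, s.indicator (fun _ => (1:ℝ)) x ∂μ := by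
          refine integral_mono (hHmul n (hg_int s hs)) (hg_int s hs) fun x => ?_
          exact mul_le_of_le_one_left (Set.indicator_nonneg (fun _ _ => zero_le_one) x)
            (Heps_le_one _ _)
      _ = (μ s).toReal := by
          rw [integral_indicator hs, setIntegral_const, smul_eq_mul, mul_one, measureReal_def]
  have hleone : ∀ᵐ x ∂μ, χ x ≤ 1 := by
    have h : 0 ≤ᵐ[μ] fun x => 1 - χ x := by
      apply ae_nonneg_of_forall_setIntegral_nonneg
        (f := fun x => 1 - χ x) ((integrable_const (1:ℝ)).sub hχint)
      intro s hs _
      rw [integral_sub (integrable_const (1:ℝ)).integrableOn hχint.integrableOn,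
        setIntegral_const, smul_eq_mul, mul_one, sub_nonneg]
      exact hsetle s hs
    filter_upwards [h] with x hx
    simpa using hx
  have h01 : ∀ᵐ x ∂μ, 0 ≤ χ x ∧ χ x ≤ 1 := by
    filter_upwards [hnonneg, hleone] with x h1 h2; exact ⟨h1, h2⟩
  -- measurable representatives
  set ub : X → ℝ := hu₀.1.mk u₀ with hub
  set vb : X → ℝ := hv.1.mk v with hvb
  have hue : u₀ =ᵐ[μ] ub := hu₀.1.ae_eq_mk
  have hve : v =ᵐ[μ] vb := hv.1.ae_eq_mk
  have hubm : Measurable ub := hu₀.1.stronglyMeasurable_mk.measurable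
  have hvbm : Measurable vb := hv.1.stronglyMeasurable_mk.measurable
  -- Part 2
  have key2 : ∀ δ : ℝ, 0 < δ → ∀ᵐ x ∂μ, vb x + δ < ub x → χ x = 1 := by
    intro δ hδ
    set A : Set X := {x | vb x + δ < ub x} with hA
    have hAm : MeasurableSet A := measurableSet_lt (hvbm.add_const δ) hubm
    set g : X → ℝ := A.indicator (fun _ => 1) with hg
    have hgint : Integrable g μ := hg_int A hAm
    have hbound : ∀ᶠ n in atTop,
        (μ A).toReal - (2/δ) * (∫ x, |u n x - u₀ x| ∂μ)
          ≤ ∫ x, Heps (ε n) (u n x - v x) * g x ∂μ := by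
      filter_upwards [hε0.eventually_lt_const (show (0:ℝ) < δ/2 by linarith)] with n hn
      have hae : ∀ᵐ x ∂μ, g x - Heps (ε n) (u n x - v x) * g x
          ≤ (2/δ) * |u n x - u₀ x| := by
        filter_upwards [hue, hve] with x hx1 hx2
        by_cases hxA : x ∈ A
        · have hg1 : g x = 1 := Set.indicator_of_mem hxA _
          rw [hg1, mul_one]
          by_cases hcase : ε n ≤ u n x - v x
          · rw [Heps_eq_one (hε n) hcase]
            simp only [sub_self]
            positivity
          · push_neg at hcase
            have hxA' : vb x + δ < ub x := hxA
            have h2 : δ/2 ≤ |u n x - u₀ x| := by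
              rw [abs_sub_comm]
              calc δ/2 ≤ u₀ x - u n x := by
                    rw [hx1]
                    have : v x = vb x := hx2
                    linarith [hn]
                _ ≤ |u₀ x - u n x| := le_abs_self _
            have hH := Heps_nonneg (ε n) (u n x - v x)
            calc 1 - Heps (ε n) (u n x - v x) ≤ 1 := by linarith
              _ = (2/δ) * (δ/2) := by field_simp
              _ ≤ (2/δ) * |u n x - u₀ x| := by
                  apply mul_le_mul_of_nonneg_left h2; positivity
        · have hg0 : g x = 0 := Set.indicator_of_notMem hxA _
          rw [hg0, mul_zero, sub_zero]
          positivity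
      have hi1 : Integrable (fun x => g x - Heps (ε n) (u n x - v x) * g x) μ :=
        hgint.sub (hHmul n hgint)
      have hi2 : Integrable (fun x => (2/δ) * |u n x - u₀ x|) μ :=
        (((hu n).sub hu₀).abs).const_mul _
      have h := integral_mono_ae hi1 hi2 hae
      rw [integral_sub hgint (hHmul n hgint), integral_const_mul] at h
      have hgI : ∫ x, g x ∂μ = (μ A).toReal := by
        rw [hg, integral_indicator hAm, setIntegral_const, smul_eq_mul, mul_one, measureReal_def]
      rw [hgI] at h
      linarith
    have hμA : (μ A).toReal ≤ ∫ x, χ x * g x ∂μ := by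
      have ht : Tendsto (fun n => (μ A).toReal - (2/δ) * (∫ x, |u n x - u₀ x| ∂μ)) atTop
          (nhds ((μ A).toReal - (2/δ) * 0)) :=
        tendsto_const_nhds.sub (huconv.const_mul _)
      simpa using le_of_tendsto_of_tendsto ht (hweak g hgint) hbound
    have heq : ∫ x, χ x * g x ∂μ = ∫ x in A, χ x ∂μ := hint_eq A hAm
    have hzero : ∫ x in A, (1 - χ x) ∂μ = 0 := by
      rw [integral_sub (integrable_const (1:ℝ)).integrableOn hχint.integrableOn,
        setIntegral_const, smul_eq_mul, mul_one, measureReal_def]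
      have := hsetle A hAm
      rw [heq] at hμA
      linarith
    have hres : (fun x => 1 - χ x) =ᵐ[μ.restrict A] 0 := by
      refine (integral_eq_zero_iff_of_nonneg_ae ?_ ?_).1 hzero
      · filter_upwards [ae_restrict_of_ae hleone] with x hx
        simpa using hx
      · exact ((integrable_const (1:ℝ)).sub hχint).integrableOn
    rw [Filter.EventuallyEq, ae_restrict_iff' hAm] at hres
    filter_upwards [hres] with x hx hlt
    have := hx hlt
    simp only [Pi.zero_apply] at this
    linarith
  -- Part 3
  have key3 : ∀ δ : ℝ, 0 < δ → ∀ᵐ x ∂μ, ub x + δ < vb x → χ x = 0 := by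
    intro δ hδ
    set A : Set X := {x | ub x + δ < vb x} with hA
    have hAm : MeasurableSet A := measurableSet_lt (hubm.add_const δ) hvbm
    set g : X → ℝ := A.indicator (fun _ => 1) with hg
    have hgint : Integrable g μ := hg_int A hAm
    have hbound : ∀ n : ℕ,
        ∫ x, Heps (ε n) (u n x - v x) * g x ∂μ
          ≤ (1/δ) * (∫ x, |u n x - u₀ x| ∂μ) := by
      intro n
      have hae : ∀ᵐ x ∂μ, Heps (ε n) (u n x - v x) * g x ≤ (1/δ) * |u n x - u₀ x| := by
        filter_upwards [hue, hve] with x hx1 hx2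
        by_cases hxA : x ∈ A
        · have hg1 : g x = 1 := Set.indicator_of_mem hxA _
          rw [hg1, mul_one]
          by_cases hcase : u n x - v x ≤ 0
          · rw [Heps_eq_zero (hε n) hcase]
            positivity
          · push_neg at hcase
            have hxA' : ub x + δ < vb x := hxA
            have h2 : δ ≤ |u n x - u₀ x| := by
              calc δ ≤ u n x - u₀ x := by
                    rw [hx1]
                    have : v x = vb x := hx2
                    linarith
                _ ≤ |u n x - u₀ x| := le_abs_self _
            calc Heps (ε n) (u n x - v x) ≤ 1 := Heps_le_one _ _
              _ = (1/δ) * δ := by field_simp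
              _ ≤ (1/δ) * |u n x - u₀ x| := by
                  apply mul_le_mul_of_nonneg_left h2; positivity
        · have hg0 : g x = 0 := Set.indicator_of_notMem hxA _
          rw [hg0, mul_zero]
          positivity
      have hi2 : Integrable (fun x => (1/δ) * |u n x - u₀ x|) μ :=
        (((hu n).sub hu₀).abs).const_mul _
      have h := integral_mono_ae (hHmul n hgint) hi2 hae
      rwa [integral_const_mul] at h
    have hμA : ∫ x, χ x * g x ∂μ ≤ 0 := by
      have ht : Tendsto (fun n => (1/δ) * (∫ x, |u n x - u₀ x| ∂μ)) atTop
          (nhds ((1/δ) * 0)) := huconv.const_mul _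
      simpa using le_of_tendsto_of_tendsto (hweak g hgint) ht
        (Eventually.of_forall hbound)
    have hlow : 0 ≤ ∫ x, χ x * g x ∂μ := by
      refine ge_of_tendsto' (hweak g hgint) fun n => integral_nonneg fun x => ?_
      exact mul_nonneg (Heps_nonneg _ _) (Set.indicator_nonneg (fun _ _ => zero_le_one) x)
    have heq : ∫ x, χ x * g x ∂μ = ∫ x in A, χ x ∂μ := hint_eq A hAm
    have hzero : ∫ x in A, χ x ∂μ = 0 := by rw [← heq]; linarith
    have hres : χ =ᵐ[μ.restrict A] 0 :=
      (integral_eq_zero_iff_of_nonneg_ae (ae_restrict_of_ae hnonneg)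
        hχint.integrableOn).1 hzero
    rw [Filter.EventuallyEq, ae_restrict_iff' hAm] at hres
    filter_upwards [hres] with x hx hlt
    simpa using hx hlt
  refine ⟨h01, ?_, ?_⟩
  · have hall : ∀ᵐ x ∂μ, ∀ k : ℕ, vb x + 1/(k+1) < ub x → χ x = 1 :=
      ae_all_iff.2 fun k => key2 _ (by positivity)
    filter_upwards [hall, hue, hve] with x hx h1 h2 hlt
    obtain ⟨k, hk⟩ := exists_nat_one_div_lt (show (0:ℝ) < ub x - vb x by
      rw [← h1, ← h2]; linarith)
    exact hx k (by linarith)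
  · have hall : ∀ᵐ x ∂μ, ∀ k : ℕ, ub x + 1/(k+1) < vb x → χ x = 0 :=
      ae_all_iff.2 fun k => key3 _ (by positivity)
    filter_upwards [hall, hue, hve] with x hx h1 h2 hlt
    obtain ⟨k, hk⟩ := exists_nat_one_div_lt (show (0:ℝ) < vb x - ub x by
      rw [← h1, ← h2]; linarith)
    exact hx k (by linarith)
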